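/- Let φ(t) satisfy dφ/dt = v(t)^{m-1} v*^{m+1} (φ sin φ)/(2π) with φ(0) = φ_0 ∈ (0, π), where r < v(t) < R for all t > 0 for constants r, R > 0 and m ≥ 1. Then for all t > 0: π - 2 cot(φ_0/2) e^{-(φ_0/(2π)) r^{m-1} v*^{m+1} t} < φ(t) < π - 2 cot(φ_0/2) e^{-(1/2) R^{m-1} v*^{m+1} t} + (2/3) cot^3(φ_0/2) e^{-(3/2) R^{m-1} v*^{m+1} t}. -/

import Mathlib

/-!
Since `x sin x > 0` on `(0, π)` and `x sin x ≤ π (π - x)`, the angle increases and the gap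
`π - φ` decays at most exponentially, so `φ` never leaves `(φ₀, π)`. The substitution
`y = cot (φ / 2)` linearises the equation: `y' = -(c φ / 2π) y` with `c = v^(m-1) v*^(m+1)`,
and `φ₀ ≤ φ < π` traps the rate `c φ / 2π` between `φ₀ r^(m-1) v*^(m+1) / 2π` and
`R^(m-1) v*^(m+1) / 2`, so `y` is squeezed between two exponentials. Finally
`φ = π - 2 arctan y`, and `y - y³/3 < arctan y < y` for `y > 0`.
-/

open Real Set

theorem mapsTo_Ici_of_forall_mapsTo_Ico {α β : Type*} [ConditionallyCompleteLinearOrder α]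
    [TopologicalSpace α] [OrderTopology α] [TopologicalSpace β] {f : α → β} {U : Set β}
    {a : α} (hf : ContinuousOn f (Ici a)) (hU : IsOpen U)
    (h : ∀ T, a ≤ T → MapsTo f (Ico a T) U → f T ∈ U) : MapsTo f (Ici a) U := by
  intro t₀ ht₀
  by_contra hout
  set S := Icc a t₀ ∩ f ⁻¹' Uᶜ
  have hS : IsClosed S :=
    (hf.mono Icc_subset_Ici_self).preimage_isClosed_of_isClosed isClosed_Icc hU.isClosed_compl
  have hbdd : BddBelow S := ⟨a, fun _ hx => hx.1.1⟩
  have hmem : sInf S ∈ S := hS.csInf_mem ⟨t₀, ⟨ht₀, le_rfl⟩, hout⟩ hbdd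
  refine hmem.2 (h _ hmem.1.1 fun u hu => ?_)
  by_contra hu'
  exact (csInf_le hbdd ⟨⟨hu.1, hu.2.le.trans hmem.1.2⟩, hu'⟩).not_gt hu.2

theorem le_mul_exp_of_hasDerivAt_le_mul {g g' : ℝ → ℝ} {k a b : ℝ} (hab : a ≤ b)
    (hg : ContinuousOn g (Icc a b)) (hg' : ∀ x ∈ Ioo a b, HasDerivAt g (g' x) x)
    (hk : ∀ x ∈ Ioo a b, g' x ≤ k * g x) : g b ≤ g a * exp (k * (b - a)) := by
  have hderiv : ∀ x, HasDerivAt (fun x => exp (-k * x)) (-k * exp (-k * x)) x := fun x => by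
    convert ((hasDerivAt_id' x).const_mul (-k)).exp using 1
    ring
  have hanti : AntitoneOn (fun x => g x * exp (-k * x)) (Icc a b) := by
    refine antitoneOn_of_hasDerivWithinAt_nonpos (convex_Icc a b)
      (f' := fun x => g' x * exp (-k * x) + g x * (-k * exp (-k * x)))
      (hg.mul (by fun_prop)) (fun x hx => ?_) fun x hx => ?_
    · rw [interior_Icc] at hx
      exact ((hg' x hx).mul (hderiv x)).hasDerivWithinAt
    · rw [interior_Icc] at hx
      have := hk x hx
      nlinarith [exp_pos (-k * x)]
  have hba := hanti ⟨le_rfl, hab⟩ ⟨hab, le_rfl⟩ hab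
  have hsplit : exp (k * (b - a)) = exp (-k * a) * exp (k * b) := by
    rw [← exp_add]; ring_nf
  calc g b = g b * exp (-k * b) * exp (k * b) := by
        rw [mul_assoc, ← exp_add]; simp
    _ ≤ g a * exp (-k * a) * exp (k * b) := by gcongr
    _ = g a * exp (k * (b - a)) := by rw [hsplit, mul_assoc]

theorem mul_exp_le_of_mul_le_hasDerivAt {g g' : ℝ → ℝ} {k a b : ℝ} (hab : a ≤ b)
    (hg : ContinuousOn g (Icc a b)) (hg' : ∀ x ∈ Ioo a b, HasDerivAt g (g' x) x)
    (hk : ∀ x ∈ Ioo a b, k * g x ≤ g' x) : g a * exp (k * (b - a)) ≤ g b := by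
  have := le_mul_exp_of_hasDerivAt_le_mul (g := -g) (g' := -g') (k := k) hab hg.neg
    (fun x hx => (hg' x hx).neg) fun x hx => by simp only [Pi.neg_apply]; linarith [hk x hx]
  simp only [Pi.neg_apply, neg_mul] at this
  linarith

theorem mul_sin_le_pi_mul_pi_sub {x : ℝ} (h0 : 0 ≤ x) (hπ : x ≤ π) :
    x * sin x ≤ π * (π - x) := by
  have hsin : sin x ≤ π - x := by
    rw [← sin_pi_sub]
    exact sin_le (by linarith)
  calc x * sin x ≤ π * sin x := by gcongr; exact sin_nonneg_of_nonneg_of_le_pi h0 hπ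
    _ ≤ π * (π - x) := by gcongr

theorem Real.arctan_lt_self {x : ℝ} (hx : 0 < x) : arctan x < x := by
  simpa [tan_arctan] using lt_tan (arctan_pos.2 hx) (arctan_lt_pi_div_two x)

theorem Real.sub_pow_three_div_three_lt_arctan {x : ℝ} (hx : 0 < x) :
    x - x ^ 3 / 3 < arctan x := by
  have hmono : StrictMonoOn (fun z => arctan z - z + z ^ 3 / 3) (Ici 0) := by
    refine strictMonoOn_of_hasDerivWithinAt_pos (convex_Ici 0) (by fun_prop)
      (fun z _ => (((hasDerivAt_arctan z).sub (hasDerivAt_id z)).add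
        ((hasDerivAt_pow 3 z).div_const 3)).hasDerivWithinAt) fun z hz => ?_
    rw [interior_Ici] at hz
    have hz' : (0 : ℝ) < z := hz
    convert (by positivity : 0 < z ^ 4 / (1 + z ^ 2)) using 1
    field_simp
    ring
  have := hmono self_mem_Ici hx.le hx
  simp only [arctan_zero, sub_zero, ne_eq, OfNat.ofNat_ne_zero, not_false_eq_true, zero_pow,
    zero_div, add_zero] at this
  linarith

theorem Real.hasDerivAt_cot {x : ℝ} (hx : sin x ≠ 0) : HasDerivAt cot (-1 / sin x ^ 2) x := by
  have hcot : cot = fun x => cos x / sin x := funext cot_eq_cos_div_sin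
  rw [hcot]
  have := (hasDerivAt_cos x).div (hasDerivAt_sin x) hx
  rwa [show -sin x * sin x - cos x * cos x = -1 by linear_combination -sin_sq_add_cos_sq x] at this

theorem Real.arctan_cot {x : ℝ} (h0 : 0 < x) (hπ : x < π) : arctan (cot x) = π / 2 - x := by
  rw [← tan_inv_eq_cot, ← tan_pi_div_two_sub, arctan_tan] <;> linarith

theorem pi_sub_two_mul_arctan_bounds {L y U : ℝ} (hL : 0 < L) (hLy : L ≤ y) (hyU : y ≤ U) :
    π - 2 * U < π - 2 * arctan y ∧ π - 2 * arctan y < π - 2 * L + 2 / 3 * L ^ 3 := by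
  have hlow := arctan_lt_self (hL.trans_le hLy)
  have hup := (sub_pow_three_div_three_lt_arctan hL).trans_le (arctan_le_arctan_iff.2 hLy)
  constructor <;> linarith

theorem Real.cot_half_pos {x : ℝ} (hx : x ∈ Ioo 0 π) : 0 < cot (x / 2) := by
  rw [cot_eq_cos_div_sin]
  exact div_pos (cos_pos_of_mem_Ioo ⟨by linarith [hx.1, pi_pos], by linarith [hx.2]⟩)
    (sin_pos_of_pos_of_lt_pi (by linarith [hx.1]) (by linarith [hx.2, pi_pos]))

def IsAngleFlow (c φ : ℝ → ℝ) : Prop :=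
  ∀ t, HasDerivAt φ (c t * (φ t * sin (φ t)) / (2 * π)) t

namespace IsAngleFlow

variable {c φ : ℝ → ℝ}

theorem continuous (hf : IsAngleFlow c φ) : Continuous φ :=
  continuous_iff_continuousAt.2 fun t => (hf t).continuousAt

theorem monotoneOn_Icc (hf : IsAngleFlow c φ) {a b : ℝ} (hc : ∀ t ∈ Ioo a b, 0 ≤ c t)
    (hφ : MapsTo φ (Ioo a b) (Icc 0 π)) : MonotoneOn φ (Icc a b) := by
  refine monotoneOn_of_hasDerivWithinAt_nonneg (convex_Icc a b) hf.continuous.continuousOn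
    (fun t _ => (hf t).hasDerivWithinAt) fun t ht => ?_
  rw [interior_Icc] at ht
  have hsin := sin_nonneg_of_nonneg_of_le_pi (hφ ht).1 (hφ ht).2
  have := hc t ht
  have := (hφ ht).1
  positivity

theorem mapsTo_Ioo (hf : IsAngleFlow c φ) {C : ℝ} (hc : ∀ t > 0, 0 ≤ c t ∧ c t ≤ C)
    (h0 : φ 0 ∈ Ioo 0 π) : MapsTo φ (Ici 0) (Ioo 0 π) := by
  refine mapsTo_Ici_of_forall_mapsTo_Ico hf.continuous.continuousOn isOpen_Ioo
    fun T hT hφT => ?_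
  rcases hT.eq_or_lt with rfl | hT
  · exact h0
  have hIoo : MapsTo φ (Ioo 0 T) (Ioo 0 π) := hφT.mono_left Ioo_subset_Ico_self
  have hpos : 0 < φ T := h0.1.trans_le <| hf.monotoneOn_Icc (fun t ht => (hc t ht.1).1)
    (hIoo.mono_right Ioo_subset_Icc_self) ⟨le_rfl, hT.le⟩ ⟨hT.le, le_rfl⟩ hT.le
  have hgap := mul_exp_le_of_mul_le_hasDerivAt (g := fun t => π - φ t) (k := -(C / 2)) hT.le
    (continuous_const.sub hf.continuous).continuousOn (fun t _ => (hf t).const_sub π)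
    fun t ht => by
      obtain ⟨hφ0, hφπ⟩ := hIoo ht
      obtain ⟨hc0, hcC⟩ := hc t ht.1
      have hsin := mul_sin_le_pi_mul_pi_sub hφ0.le hφπ.le
      have hsin0 := mul_nonneg hφ0.le (sin_nonneg_of_nonneg_of_le_pi hφ0.le hφπ.le)
      rw [neg_mul, neg_le_neg_iff, div_le_iff₀ (by positivity)]
      calc c t * (φ t * sin (φ t)) ≤ C * (π * (π - φ t)) :=
            mul_le_mul hcC hsin hsin0 (hc0.trans hcC)
        _ = C / 2 * (π - φ t) * (2 * π) := by ring
  exact ⟨hpos, sub_pos.1 ((mul_pos (sub_pos.2 h0.2) (exp_pos _)).trans_le hgap)⟩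

theorem hasDerivAt_cot_half (hf : IsAngleFlow c φ) {t : ℝ} (ht : φ t ∈ Ioo 0 π) :
    HasDerivAt (fun s => cot (φ s / 2)) (-(c t * φ t / (2 * π)) * cot (φ t / 2)) t := by
  have hsin : 0 < sin (φ t / 2) :=
    sin_pos_of_pos_of_lt_pi (by linarith [ht.1]) (by linarith [ht.2, pi_pos])
  refine ((hasDerivAt_cot hsin.ne').comp t ((hf t).div_const 2)).congr_deriv ?_
  rw [cot_eq_cos_div_sin, show φ t = 2 * (φ t / 2) by ring, sin_two_mul]
  field_simp

theorem cot_half_le (hf : IsAngleFlow c φ) {a t : ℝ} (ht : 0 ≤ t)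
    (hφ : MapsTo φ (Icc 0 t) (Ioo 0 π)) (ha : ∀ s ∈ Ioo 0 t, a ≤ c s * φ s / (2 * π)) :
    cot (φ t / 2) ≤ cot (φ 0 / 2) * exp (-a * t) := by
  have h := le_mul_exp_of_hasDerivAt_le_mul (k := -a) ht
    (fun s hs => (hf.hasDerivAt_cot_half (hφ hs)).continuousAt.continuousWithinAt)
    (fun s hs => hf.hasDerivAt_cot_half (hφ (Ioo_subset_Icc_self hs))) fun s hs => by
      nlinarith [ha s hs, cot_half_pos (hφ (Ioo_subset_Icc_self hs))]
  rwa [sub_zero] at h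

theorem le_cot_half (hf : IsAngleFlow c φ) {K t : ℝ} (ht : 0 ≤ t)
    (hφ : MapsTo φ (Icc 0 t) (Ioo 0 π)) (hK : ∀ s ∈ Ioo 0 t, c s * φ s / (2 * π) ≤ K) :
    cot (φ 0 / 2) * exp (-K * t) ≤ cot (φ t / 2) := by
  have h := mul_exp_le_of_mul_le_hasDerivAt (k := -K) ht
    (fun s hs => (hf.hasDerivAt_cot_half (hφ hs)).continuousAt.continuousWithinAt)
    (fun s hs => hf.hasDerivAt_cot_half (hφ (Ioo_subset_Icc_self hs))) fun s hs => by
      nlinarith [hK s hs, cot_half_pos (hφ (Ioo_subset_Icc_self hs))]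
  rwa [sub_zero] at h

theorem exp_bounds (hf : IsAngleFlow c φ) {cr cR t : ℝ} (hcr : 0 ≤ cr)
    (hc : ∀ s > 0, cr ≤ c s ∧ c s ≤ cR) (h0 : φ 0 ∈ Ioo 0 π) (ht : 0 ≤ t) :
    π - 2 * (cot (φ 0 / 2) * exp (-(φ 0 / (2 * π) * cr) * t)) < φ t ∧
      φ t < π - 2 * (cot (φ 0 / 2) * exp (-(cR / 2) * t))
        + 2 / 3 * (cot (φ 0 / 2) * exp (-(cR / 2) * t)) ^ 3 := by
  have hinv := hf.mapsTo_Ioo (fun s hs => ⟨hcr.trans (hc s hs).1, (hc s hs).2⟩) h0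
  have hmono := hf.monotoneOn_Icc (b := t) (fun s hs => hcr.trans (hc s hs.1).1)
    fun s hs => Ioo_subset_Icc_self (hinv hs.1.le)
  have hupper := hf.cot_half_le ht (hinv.mono_left Icc_subset_Ici_self) fun s hs => by
    have hφs : φ 0 ≤ φ s := hmono ⟨le_rfl, ht⟩ (Ioo_subset_Icc_self hs) hs.1.le
    calc φ 0 / (2 * π) * cr = cr * φ 0 / (2 * π) := by ring
      _ ≤ c s * φ s / (2 * π) := by
        gcongr
        exacts [h0.1.le, hcr.trans (hc s hs.1).1, (hc s hs.1).1]
  have hlower := hf.le_cot_half ht (hinv.mono_left Icc_subset_Ici_self) fun s hs => by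
    rw [div_le_iff₀ (by positivity)]
    calc c s * φ s ≤ cR * π :=
          mul_le_mul (hc s hs.1).2 (hinv hs.1.le).2.le (hinv hs.1.le).1.le
            (hcr.trans ((hc s hs.1).1.trans (hc s hs.1).2))
      _ = cR / 2 * (2 * π) := by ring
  have hφt : φ t = π - 2 * arctan (cot (φ t / 2)) := by
    rw [arctan_cot (by linarith [(hinv ht).1]) (by linarith [(hinv ht).2, pi_pos])]
    ring
  have hL : 0 < cot (φ 0 / 2) * exp (-(cR / 2) * t) :=
    mul_pos (cot_half_pos h0) (exp_pos _)
  rw [hφt]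
  exact pi_sub_two_mul_arctan_bounds hL hlower hupper

end IsAngleFlow

theorem multi_layer_angle_bounds_general
    (m : ℕ) (vs r R : ℝ) (hvs : 0 < vs) (hr : 0 < r)
    (v φ : ℝ → ℝ) (φ0 : ℝ) (hinit : φ 0 = φ0) (h0 : 0 < φ0 ∧ φ0 < π)
    (hbound : ∀ t > 0, r < v t ∧ v t < R)
    (hφ : ∀ t, HasDerivAt φ
      ((v t)^(m-1) * vs^(m+1) * (φ t * Real.sin (φ t)) / (2*π)) t) :
    ∀ t > 0,
      π - 2 * Real.cot (φ0/2) * Real.exp (-(φ0/(2*π)) * r^(m-1) * vs^(m+1) * t) < φ t ∧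
      φ t < π - 2 * Real.cot (φ0/2) * Real.exp (-(1/2) * R^(m-1) * vs^(m+1) * t)
              + (2/3) * (Real.cot (φ0/2))^3
                * Real.exp (-(3/2) * R^(m-1) * vs^(m+1) * t) := by
  intro t ht
  have hc : ∀ s > 0, r ^ (m - 1) * vs ^ (m + 1) ≤ v s ^ (m - 1) * vs ^ (m + 1) ∧
      v s ^ (m - 1) * vs ^ (m + 1) ≤ R ^ (m - 1) * vs ^ (m + 1) := fun s hs => by
    obtain ⟨hrv, hvR⟩ := hbound s hs
    exact ⟨by gcongr, by gcongr; linarith⟩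
  obtain ⟨hlow, hup⟩ := IsAngleFlow.exp_bounds (c := fun s => v s ^ (m - 1) * vs ^ (m + 1)) hφ
    (by positivity) hc (hinit ▸ h0) ht.le
  rw [hinit] at hlow hup
  refine ⟨lt_of_eq_of_lt (by ring_nf) hlow, hup.trans_eq ?_⟩
  rw [mul_pow, ← exp_nat_mul]
  ring_nf

/-- Angle bounds for the `(m+1)`-layer single ReLU neuron gradient flow with balanced
initialization, assuming `r < v(t) < R` for all `t > 0`. -/
theorem multi_layer_angle_bounds
    (m : ℕ) (hm : 1 ≤ m) (vs r R : ℝ) (hvs : 0 < vs) (hr : 0 < r) (hR : 0 < R)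
    (v φ : ℝ → ℝ) (φ0 : ℝ) (hinit : φ 0 = φ0) (h0 : 0 < φ0 ∧ φ0 < π)
    (hbound : ∀ t > 0, r < v t ∧ v t < R)
    (hφ : ∀ t, HasDerivAt φ
      ((v t)^(m-1) * vs^(m+1) * (φ t * Real.sin (φ t)) / (2*π)) t) :
    ∀ t > 0,
      π - 2 * Real.cot (φ0/2) * Real.exp (-(φ0/(2*π)) * r^(m-1) * vs^(m+1) * t) < φ t ∧
      φ t < π - 2 * Real.cot (φ0/2) * Real.exp (-(1/2) * R^(m-1) * vs^(m+1) * t)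
              + (2/3) * (Real.cot (φ0/2))^3
                * Real.exp (-(3/2) * R^(m-1) * vs^(m+1) * t) :=
  multi_layer_angle_bounds_general m vs r R hvs hr v φ φ0 hinit h0 hbound hφ
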